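/- (Noether charge of the Kodama-like current in Kerr–Vaidya spacetime.) Let a ≠ 0, r > 0, v ∈ ℝ, and let M : ℝ → ℝ be twice continuously differentiable with M(u) → 0 and M′(u) → 0 as u → −∞, and with M′ and M″ Lebesgue-integrable on (−∞, v]. Then (1/(8π)) · ∫_{u ∈ (−∞,v]} ( ∫₀^{π} ( ∫₀^{2π} (sinϑ/ρ⁴)·[(ρ⁴ + r⁴ + r²·a²·sin²ϑ − a⁴·cos²ϑ)·M′(u) − r·ρ²·a²·sin²ϑ·M″(u)] dψ ) dϑ ) du = M(v) − M′(v)·( ((r² + a²)/(2a))·arctan(a/r) − r/2 ). -/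

import Mathlib

noncomputable section

open Real MeasureTheory

/-- ρ² = r² + a²·cos²ϑ. -/
def rho2 (a r θ : ℝ) : ℝ := r ^ 2 + a ^ 2 * Real.cos θ ^ 2

lemma rho2_pos (a : ℝ) {r : ℝ} (hr : 0 < r) (θ : ℝ) : 0 < rho2 a r θ := by
  unfold rho2; positivity

lemma theta_integral (a r : ℝ) (ha : a ≠ 0) (hr : 0 < r) (p q : ℝ) :
    ∫ θ in (0:ℝ)..π, Real.sin θ / rho2 a r θ ^ 2 *
      ((rho2 a r θ ^ 2 + r ^ 4 + r ^ 2 * a ^ 2 * Real.sin θ ^ 2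
          - a ^ 4 * Real.cos θ ^ 2) * p
        - r * rho2 a r θ * a ^ 2 * Real.sin θ ^ 2 * q)
    = 4 * p - (2 * (r ^ 2 + a ^ 2) / a * Real.arctan (a / r) - 2 * r) * q := by
  set G : ℝ → ℝ := fun θ =>
    (-(Real.cos θ) - (r ^ 2 + a ^ 2) * Real.cos θ / rho2 a r θ) * p
    + (-(r * Real.cos θ) + (r ^ 2 + a ^ 2) / a * Real.arctan (a * Real.cos θ / r)) * q
    with hG
  have hderiv : ∀ θ ∈ Set.uIcc (0:ℝ) π, HasDerivAt G
      (Real.sin θ / rho2 a r θ ^ 2 *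
        ((rho2 a r θ ^ 2 + r ^ 4 + r ^ 2 * a ^ 2 * Real.sin θ ^ 2
            - a ^ 4 * Real.cos θ ^ 2) * p
          - r * rho2 a r θ * a ^ 2 * Real.sin θ ^ 2 * q)) θ := by
    intro θ _
    have hρ : rho2 a r θ ≠ 0 := (rho2_pos a hr θ).ne'
    have hcos : HasDerivAt Real.cos (-Real.sin θ) θ := Real.hasDerivAt_cos θ
    have hρd : HasDerivAt (fun θ => rho2 a r θ)
        (a ^ 2 * (2 * Real.cos θ * (-Real.sin θ))) θ := by
      unfold rho2
      exact ((hasDerivAt_const θ (r^2)).add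
        (((hcos.pow 2)).const_mul (a^2))).congr_deriv (by norm_num)
    have h1 : HasDerivAt (fun θ => -(Real.cos θ) - (r ^ 2 + a ^ 2) * Real.cos θ / rho2 a r θ)
        (-(-Real.sin θ) - ((r ^ 2 + a ^ 2) * -Real.sin θ * rho2 a r θ
          - (r ^ 2 + a ^ 2) * Real.cos θ * (a ^ 2 * (2 * Real.cos θ * (-Real.sin θ))))
            / rho2 a r θ ^ 2) θ :=
      hcos.neg.sub ((hcos.const_mul (r^2+a^2)).div hρd hρ)
    have harc : HasDerivAt (fun θ => Real.arctan (a * Real.cos θ / r))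
        (1 / (1 + (a * Real.cos θ / r) ^ 2) * (a * -Real.sin θ / r)) θ := by
      have := (Real.hasDerivAt_arctan (a * Real.cos θ / r)).comp θ
        (((hcos.const_mul a).div_const r))
      exact this
    have h2 : HasDerivAt (fun θ => -(r * Real.cos θ)
        + (r ^ 2 + a ^ 2) / a * Real.arctan (a * Real.cos θ / r))
        (-(r * -Real.sin θ) + (r ^ 2 + a ^ 2) / a
          * (1 / (1 + (a * Real.cos θ / r) ^ 2) * (a * -Real.sin θ / r))) θ :=
      ((hcos.const_mul r).neg).add (harc.const_mul _)
    have := (h1.mul_const p).add (h2.mul_const q)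
    refine this.congr_deriv ?_
    have hs : Real.sin θ ^ 2 = 1 - Real.cos θ ^ 2 := Real.sin_sq θ
    have hx : 1 + (a * Real.cos θ / r) ^ 2 ≠ 0 := by positivity
    have hr' : r ≠ 0 := hr.ne'
    field_simp
    rw [hs]
    unfold rho2
    ring
  have hcont : Continuous fun θ => Real.sin θ / rho2 a r θ ^ 2 *
      ((rho2 a r θ ^ 2 + r ^ 4 + r ^ 2 * a ^ 2 * Real.sin θ ^ 2
          - a ^ 4 * Real.cos θ ^ 2) * p
        - r * rho2 a r θ * a ^ 2 * Real.sin θ ^ 2 * q) := by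
    have hρc : Continuous fun θ => rho2 a r θ := by unfold rho2; continuity
    apply Continuous.mul
    · exact Real.continuous_sin.div (by continuity)
        (fun θ => pow_ne_zero 2 (rho2_pos a hr θ).ne')
    · continuity
  rw [intervalIntegral.integral_eq_sub_of_hasDerivAt hderiv
    (hcont.intervalIntegrable 0 π)]
  have h1 : Real.arctan (a * (-1) / r) = - Real.arctan (a / r) := by
    rw [show a * (-1) / r = -(a / r) by ring, Real.arctan_neg]
  simp only [hG, Real.cos_pi, Real.cos_zero, mul_one]
  unfold rho2
  rw [Real.cos_pi, Real.cos_zero, h1]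
  have h2 : (r:ℝ)^2 + a^2*(-1:ℝ)^2 ≠ 0 := by positivity
  have h3 : (r:ℝ)^2 + a^2*(1:ℝ)^2 ≠ 0 := by positivity
  field_simp
  ring

/-- Noether charge of the Kodama-like current in Kerr–Vaidya spacetime:
`Q_K = (1/(8π))·∫_{Σ_r} J^a n_a dvol` equals `M(v) − M′(v)·(((r²+a²)/(2a))·arctan(a/r) − r/2)`. -/
theorem kodama_noether_charge (a r v : ℝ) (ha : a ≠ 0) (hr : 0 < r)
    (M : ℝ → ℝ) (hM : ContDiff ℝ 2 M)
    (hM0 : Filter.Tendsto M Filter.atBot (nhds 0))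
    (hM'0 : Filter.Tendsto (deriv M) Filter.atBot (nhds 0))
    (hM'int : IntegrableOn (deriv M) (Set.Iic v))
    (hM''int : IntegrableOn (deriv (deriv M)) (Set.Iic v)) :
    1 / (8 * π) *
        ∫ u in Set.Iic v,
          ∫ θ in (0:ℝ)..π, ∫ _ψ in (0:ℝ)..(2 * π),
            Real.sin θ / rho2 a r θ ^ 2 *
              ((rho2 a r θ ^ 2 + r ^ 4 + r ^ 2 * a ^ 2 * Real.sin θ ^ 2
                  - a ^ 4 * Real.cos θ ^ 2) * deriv M u
                - r * rho2 a r θ * a ^ 2 * Real.sin θ ^ 2 * deriv (deriv M) u)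
      = M v - deriv M v * ((r ^ 2 + a ^ 2) / (2 * a) * Real.arctan (a / r) - r / 2) := by
  set B : ℝ := 2 * (r ^ 2 + a ^ 2) / a * Real.arctan (a / r) - 2 * r with hB
  have hinner : ∀ u : ℝ,
      (∫ θ in (0:ℝ)..π, ∫ _ψ in (0:ℝ)..(2 * π),
        Real.sin θ / rho2 a r θ ^ 2 *
          ((rho2 a r θ ^ 2 + r ^ 4 + r ^ 2 * a ^ 2 * Real.sin θ ^ 2
              - a ^ 4 * Real.cos θ ^ 2) * deriv M u
            - r * rho2 a r θ * a ^ 2 * Real.sin θ ^ 2 * deriv (deriv M) u))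
      = (8 * π) * deriv M u - (2 * π * B) * deriv (deriv M) u := by
    intro u
    have : ∀ θ : ℝ, (∫ _ψ in (0:ℝ)..(2 * π),
        Real.sin θ / rho2 a r θ ^ 2 *
          ((rho2 a r θ ^ 2 + r ^ 4 + r ^ 2 * a ^ 2 * Real.sin θ ^ 2
              - a ^ 4 * Real.cos θ ^ 2) * deriv M u
            - r * rho2 a r θ * a ^ 2 * Real.sin θ ^ 2 * deriv (deriv M) u))
        = (2 * π) * (Real.sin θ / rho2 a r θ ^ 2 *
          ((rho2 a r θ ^ 2 + r ^ 4 + r ^ 2 * a ^ 2 * Real.sin θ ^ 2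
              - a ^ 4 * Real.cos θ ^ 2) * deriv M u
            - r * rho2 a r θ * a ^ 2 * Real.sin θ ^ 2 * deriv (deriv M) u)) := by
      intro θ
      rw [intervalIntegral.integral_const]
      simp [smul_eq_mul]
    simp only [this]
    rw [intervalIntegral.integral_const_mul, theta_integral a r ha hr]
    ring
  have hMdiff : ∀ x : ℝ, HasDerivAt M (deriv M x) x := fun x =>
    ((hM.differentiable (by norm_num)) x).hasDerivAt
  have hM'diff : ∀ x : ℝ, HasDerivAt (deriv M) (deriv (deriv M) x) x := fun x =>
    (((hM.iterate_deriv' 1 1).differentiable (by norm_num)).differentiableAt (x := x)).hasDerivAt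
  have hI1 : ∫ u in Set.Iic v, deriv M u = M v := by
    have := integral_Iic_of_hasDerivAt_of_tendsto' (f := M) (f' := deriv M) (a := v)
      (fun x _ => hMdiff x) hM'int hM0
    simpa using this
  have hI2 : ∫ u in Set.Iic v, deriv (deriv M) u = deriv M v := by
    have := integral_Iic_of_hasDerivAt_of_tendsto' (f := deriv M) (f' := deriv (deriv M)) (a := v)
      (fun x _ => hM'diff x) hM''int hM'0
    simpa using this
  simp only [hinner]
  rw [integral_sub ((hM'int.const_mul _)) ((hM''int.const_mul _)),
    integral_const_mul, integral_const_mul, hI1, hI2]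
  have hπ : (π : ℝ) ≠ 0 := Real.pi_ne_zero
  rw [hB]
  field_simp
  ring
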